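/- arXiv:1305.6349 — 5 statements merged into one kernel-verified Lean document; each statement's English description precedes it below -/
import Mathlib

section
/- Let D be a set with d elements listed as (e_1, ..., e_d), and let s be a nonzero integer with s ≤ d. Then the s-element subsets of D can be ordered as a sequence (S_i : 1 ≤ i ≤ C(d,s)) such that e_j ∈ S_i whenever i ≡ j (mod d). -/
/-!
Let `τ` rotate `D` by `e_j ↦ e_{j+1}` and let it act on `s`-subsets. Every orbit of this
action can be listed as `T, τ T, τ² T, …` up to its period, and if `e_p ∈ T` then the `i`-th
entry contains `e_{p+i}`. Since subsets are nonempty, every orbit contains a `T` with `e_p ∈ T`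
for any prescribed `p`; so the orbits can be concatenated one after another, each one started
at the index where the previous one stopped.
-/

open Function Finset
open scoped Fin.NatCast

section Listing

variable {β : Type*} {f : β → β}

theorem iterate_apply_of_step (P : ℕ → β → Prop) (hstep : ∀ p y, P p y → P (p + 1) (f y))
    {p : ℕ} {y : β} (h : P p y) (k : ℕ) : P (p + k) (f^[k] y) := by
  induction k with
  | zero => simpa
  | succ k ih => rw [iterate_succ_apply', ← add_assoc]; exact hstep _ _ ih

theorem apply_mem_periodicOrbit_iff (hf : Injective f) {x y : β} (hx : x ∈ periodicPts f) :
    f y ∈ periodicOrbit f x ↔ y ∈ periodicOrbit f x := by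
  refine ⟨fun h => ?_, fun h => ?_⟩
  · obtain ⟨k, hk⟩ := (mem_periodicOrbit_iff hx).1 h
    have hm := minimalPeriod_pos_of_mem_periodicPts hx
    refine (mem_periodicOrbit_iff hx).2 ⟨k + minimalPeriod f x - 1, hf ?_⟩
    rw [← iterate_succ_apply' f, Nat.succ_eq_add_one, Nat.sub_add_cancel (by omega),
      iterate_add_apply, iterate_minimalPeriod, hk]
  · obtain ⟨k, rfl⟩ := (mem_periodicOrbit_iff hx).1 h
    rw [← iterate_succ_apply' f]
    exact iterate_mem_periodicOrbit hx _

variable [DecidableEq β] [Finite β]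

theorem exists_nodup_list_toFinset_eq_of_mapsTo (P : ℕ → β → Prop) (hf : Injective f)
    (hstep : ∀ p y, P p y → P (p + 1) (f y)) (F : Finset β) (hF : Set.MapsTo f F F)
    (hreach : ∀ y ∈ F, ∀ p, ∃ k, P p (f^[k] y)) (p : ℕ) :
    ∃ l : List β, l.Nodup ∧ l.toFinset = F ∧ ∀ i (hi : i < l.length), P (p + i) l[i] := by
  induction F using Finset.strongInduction generalizing p with
  | H F ih =>
  rcases F.eq_empty_or_nonempty with rfl | ⟨y, hy⟩
  · exact ⟨[], by simp⟩
  obtain ⟨k, hk⟩ := hreach y hy p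
  set x := f^[k] y
  have hx : x ∈ periodicPts f := hf.mem_periodicPts x
  set m := minimalPeriod f x
  set O := (List.range m).map fun i => f^[i] x
  have hO : ∀ z, z ∈ O ↔ z ∈ periodicOrbit f x := by
    simp [O, m, periodicOrbit_def]
  have hOF : ∀ z ∈ O, z ∈ F := by
    intro z hz
    obtain ⟨i, rfl⟩ := (mem_periodicOrbit_iff hx).1 ((hO z).1 hz)
    exact hF.iterate _ (hF.iterate _ hy)
  set F' := F.filter (· ∉ O)
  have hF' : F' ⊂ F := by
    have hxO := (hO x).2 (self_mem_periodicOrbit hx)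
    exact filter_ssubset.2 ⟨x, hOF x hxO, not_not.2 hxO⟩
  have hF'maps : Set.MapsTo f F' F' := by
    intro z hz
    simp only [F', coe_filter, Set.mem_ofPred_eq, hO] at hz ⊢
    exact ⟨hF hz.1, by rw [apply_mem_periodicOrbit_iff hf hx]; exact hz.2⟩
  obtain ⟨l, hl, hlF, hlP⟩ := ih F' hF' hF'maps
    (fun z hz => hreach z (filter_subset _ _ hz)) (p + m)
  refine ⟨O ++ l, List.nodup_append.2 ⟨?_, hl, ?_⟩, ?_, ?_⟩
  · have := nodup_periodicOrbit (f := f) (x := x)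
    rwa [periodicOrbit_def, Cycle.nodup_coe_iff] at this
  · rintro a ha b hb rfl
    have haF' : a ∈ F' := hlF ▸ List.mem_toFinset.2 hb
    exact (mem_filter.1 haF').2 ha
  · ext z
    have := hOF z
    simp only [List.toFinset_append, hlF, mem_union, List.mem_toFinset, F', mem_filter]
    tauto
  · intro i hi
    rw [List.getElem_append]
    split_ifs with h
    · simp only [O, List.getElem_map, List.getElem_range]
      exact iterate_apply_of_step P hstep hk i
    · have := hlP (i - O.length) (by rw [List.length_append] at hi; omega)
      simp only [O, List.length_map, List.length_range] at this h ⊢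
      rwa [show p + m + (i - m) = p + i by omega] at this

end Listing

section Rotation

variable {α : Type*} {d : ℕ} (e : Fin d ≃ α)

def rotateFinset (T : Finset α) : Finset α :=
  T.map (e.permCongr (finRotate d)).toEmbedding

theorem rotateFinset_injective : Injective (rotateFinset e) :=
  map_injective _

@[simp]
theorem card_rotateFinset (T : Finset α) : (rotateFinset e T).card = T.card :=
  card_map _

variable [NeZero d]

theorem natCast_succ_mem_rotateFinset {T : Finset α} {p : ℕ} (h : e (p : Fin d) ∈ T) :
    e ((p + 1 : ℕ) : Fin d) ∈ rotateFinset e T :=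
  mem_map.2 ⟨e p, h, by simp [finRotate_apply]⟩

theorem exists_natCast_mem_iterate_rotateFinset {T : Finset α} (hT : T.Nonempty) (p : ℕ) :
    ∃ k, e (p : Fin d) ∈ (rotateFinset e)^[k] T := by
  obtain ⟨a, ha⟩ := hT
  have hj : e ((e.symm a : ℕ) : Fin d) ∈ T := by simpa using ha
  -- shifting the target by `d` keeps the subtraction from truncating, and `(p + d : Fin d) = p`
  refine ⟨p + d - e.symm a, ?_⟩
  have := iterate_apply_of_step (fun p T => e (p : Fin d) ∈ T)
    (fun _ _ => natCast_succ_mem_rotateFinset e) hj (p + d - e.symm a)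
  simpa [show (e.symm a : ℕ) + (p + d - e.symm a) = p + d by omega] using this

end Rotation

theorem stmt_3_general {α : Type*} [Fintype α] [DecidableEq α] (d s : ℕ)
    (e : Fin d ≃ α) (hs : 0 < s) (hsd : s ≤ d) :
    ∃ S : Fin (d.choose s) → Finset α,
      Function.Injective S ∧
      (∀ T : Finset α, T.card = s → ∃ i, S i = T) ∧
      (∀ i, (S i).card = s) ∧
      (∀ i : Fin (d.choose s), ∀ j : Fin d, (i : ℕ) % d = (j : ℕ) → e j ∈ S i) := by
  have : NeZero d := ⟨by omega⟩
  obtain ⟨l, hl, hlF, hlP⟩ := exists_nodup_list_toFinset_eq_of_mapsTo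
    (fun p T => e (p : Fin d) ∈ T) (rotateFinset_injective e)
    (fun _ _ => natCast_succ_mem_rotateFinset e) (powersetCard s univ)
    (fun T hT => by simpa using hT)
    (fun T hT => exists_natCast_mem_iterate_rotateFinset e
      (card_pos.1 ((mem_powersetCard.1 hT).2 ▸ hs))) 0
  have hlen : l.length = d.choose s := by
    rw [← List.toFinset_card_of_nodup hl, hlF, card_powersetCard, card_univ,
      Fintype.card_congr e.symm, Fintype.card_fin]
  have hmem : ∀ T, T ∈ l ↔ T.card = s := fun T => by
    rw [← List.mem_toFinset, hlF]; simp
  refine ⟨fun i => l[i.val], fun i j hij => Fin.ext (hl.getElem_inj_iff.1 hij), ?_,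
    fun i => (hmem _).1 (List.getElem_mem _), fun i j hij => ?_⟩
  · intro T hT
    obtain ⟨i, hi, rfl⟩ := List.mem_iff_getElem.1 ((hmem T).2 hT)
    exact ⟨⟨i, by omega⟩, rfl⟩
  · have := hlP i (by omega)
    rwa [zero_add, show ((i : ℕ) : Fin d) = j from Fin.ext (by simp [hij])] at this

/-- Let `D` be a set with `d` elements listed as `e 0, …, e (d-1)` (an enumeration
`e : Fin d ≃ α`), and let `s` be a nonzero integer with `s ≤ d`.  Then the
`s`-element subsets of `D` can be ordered as a sequence
`S : Fin (d.choose s) → Finset α` (a bijective listing of all `s`-subsets)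
such that `e j ∈ S i` whenever `i ≡ j (mod d)`. -/
theorem stmt_3 {α : Type*} [Fintype α] [DecidableEq α] (d s : ℕ)
    (hcard : Fintype.card α = d) (e : Fin d ≃ α) (hs : 0 < s) (hsd : s ≤ d) :
    ∃ S : Fin (d.choose s) → Finset α,
      Function.Injective S ∧
      (∀ T : Finset α, T.card = s → ∃ i, S i = T) ∧
      (∀ i, (S i).card = s) ∧
      (∀ i : Fin (d.choose s), ∀ j : Fin d, (i : ℕ) % d = (j : ℕ) → e j ∈ S i) :=
  stmt_3_general d s e hs hsd
end

section
/- Let D be a set with d elements listed as (e_1, ..., e_d). Then the nonempty subsets of D can be ordered (S_i : 1 ≤ i ≤ 2^d - 1) so that e_j ∈ S_i whenever i ≡ j (mod d), and such that i ≤ j implies |S_i| ≤ |S_j|. -/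
/-!
Rotation `A ↦ 1 +ᵥ A` of `Fin d` preserves cardinality, so each cardinality class is a union of
rotation orbits. An orbit `A, 1 +ᵥ A, …` listed from a rotate `A` containing the current
position `p` has its `t`-th member containing `p + t`; listing the orbits of a class one after
another keeps this property, and concatenating the classes by increasing cardinality gives the
ordering.
-/

namespace Function

variable {β : Type*} {f : β → β}

theorem mem_periodicOrbit_of_apply_mem {a b : β} (ha : a ∈ periodicPts f)
    (hb : b ∈ periodicPts f) (h : f b ∈ periodicOrbit f a) : b ∈ periodicOrbit f a := by
  obtain ⟨n, hn⟩ := (mem_periodicOrbit_iff ha).mp h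
  obtain ⟨k, hk, hkb⟩ := hb
  obtain ⟨k, rfl⟩ := Nat.exists_eq_succ_of_ne_zero hk.ne'
  refine (mem_periodicOrbit_iff ha).mpr ⟨k + n, ?_⟩
  rw [iterate_add_apply, hn, ← iterate_succ_apply, hkb.eq]

variable {P : ℕ → β → Prop}

theorem iterate_of_step (hP : ∀ t b, P t b → P (t + 1) (f b)) {p : ℕ} {a : β}
    (ha : P p a) : ∀ t, P (p + t) (f^[t] a)
  | 0 => ha
  | t + 1 => by
    rw [iterate_succ_apply', ← Nat.add_assoc]
    exact hP _ _ (iterate_of_step hP ha t)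

theorem forall_mem_zipIdx_map_iterate (hP : ∀ t b, P t b → P (t + 1) (f b)) {p : ℕ} {a : β}
    (ha : P p a) (ℓ : ℕ) : ∀ x ∈ ((List.range ℓ).map (f^[·] a)).zipIdx p, P x.2 x.1 := by
  intro x hx
  obtain ⟨i, hi, rfl⟩ := List.mem_iff_getElem.mp hx
  simpa using iterate_of_step hP ha i

theorem exists_nodup_list_forall_mem_zipIdx [DecidableEq β]
    (hP : ∀ t b, P t b → P (t + 1) (f b)) (𝒮 : Finset β) (h𝒮 : Set.MapsTo f 𝒮 𝒮)
    (hper : ∀ b ∈ 𝒮, b ∈ periodicPts f) (hreach : ∀ b ∈ 𝒮, ∀ p, ∃ m, P p (f^[m] b)) (p : ℕ) :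
    ∃ L : List β, L.Nodup ∧ (∀ b, b ∈ L ↔ b ∈ 𝒮) ∧ ∀ x ∈ L.zipIdx p, P x.2 x.1 := by
  induction 𝒮 using Finset.strongInduction generalizing p with
  | H 𝒮 ih =>
  rcases 𝒮.eq_empty_or_nonempty with rfl | ⟨b, hb⟩
  · exact ⟨[], List.nodup_nil, by simp, by simp⟩
  obtain ⟨m, hm⟩ := hreach b hb p
  set a := f^[m] b
  have ha : a ∈ 𝒮 := h𝒮.iterate m hb
  set O := (List.range (minimalPeriod f a)).map (f^[·] a)
  have hO : ∀ c, c ∈ O ↔ c ∈ periodicOrbit f a := fun c => Cycle.mem_coe_iff.symm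
  have hO𝒮 : ∀ c ∈ O, c ∈ 𝒮 := by
    intro c hc
    obtain ⟨n, rfl⟩ := (mem_periodicOrbit_iff (hper a ha)).mp ((hO c).mp hc)
    exact h𝒮.iterate n ha
  set 𝒮' := 𝒮.filter (· ∉ O)
  have hsub : 𝒮' ⊂ 𝒮 := Finset.filter_ssubset.mpr
    ⟨a, ha, not_not.mpr ((hO a).mpr (self_mem_periodicOrbit (hper a ha)))⟩
  have h𝒮' : Set.MapsTo f 𝒮' 𝒮' := by
    intro c hc
    simp only [Finset.coe_filter, Set.mem_ofPred_eq, 𝒮'] at hc ⊢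
    refine ⟨h𝒮 hc.1, fun hfc => hc.2 ?_⟩
    exact (hO c).mpr (mem_periodicOrbit_of_apply_mem (hper a ha) (hper c hc.1) ((hO _).mp hfc))
  obtain ⟨L, hL, hL𝒮', hLP⟩ := ih 𝒮' hsub h𝒮'
    (fun c hc => hper c (Finset.mem_of_mem_filter c hc))
    (fun c hc => hreach c (Finset.mem_of_mem_filter c hc)) (p + O.length)
  refine ⟨O ++ L, ?_, ?_, ?_⟩
  · refine (Cycle.nodup_coe_iff.mp nodup_periodicOrbit).append hL fun c hcO hcL => ?_
    exact (Finset.mem_filter.mp ((hL𝒮' c).mp hcL)).2 hcO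
  · intro c
    rw [List.mem_append, hL𝒮', Finset.mem_filter]
    by_cases hc : c ∈ O <;> simp [hc, hO𝒮]
  · rw [List.zipIdx_append]
    exact List.forall_mem_append.mpr ⟨forall_mem_zipIdx_map_iterate hP hm _, hLP⟩

end Function

open Function Pointwise
open scoped Fin.NatCast

section Rotation

variable {d : ℕ} [NeZero d]

theorem exists_nodup_list_natCast_mem_of_vadd_mem (𝒮 : Finset (Finset (Fin d)))
    (h𝒮 : ∀ A ∈ 𝒮, (1 : Fin d) +ᵥ A ∈ 𝒮) (hne : ∀ A ∈ 𝒮, A.Nonempty) (p : ℕ) :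
    ∃ L : List (Finset (Fin d)), L.Nodup ∧ (∀ A, A ∈ L ↔ A ∈ 𝒮) ∧
      ∀ x ∈ L.zipIdx p, (x.2 : Fin d) ∈ x.1 := by
  refine exists_nodup_list_forall_mem_zipIdx (f := ((1 : Fin d) +ᵥ ·))
    (P := fun t A => (t : Fin d) ∈ A) ?_ 𝒮 h𝒮 ?_ ?_ p
  · intro t A ht
    simpa [add_comm] using Finset.vadd_mem_vadd_finset (a := (1 : Fin d)) ht
  · exact fun A _ => ⟨d, NeZero.pos d, by simp [IsPeriodicPt, IsFixedPt, vadd_iterate]⟩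
  · intro A hA p
    obtain ⟨a, ha⟩ := hne A hA
    refine ⟨((p : Fin d) - a).val, ?_⟩
    simpa [vadd_iterate] using Finset.vadd_mem_vadd_finset (a := (p : Fin d) - a) ha

theorem exists_nodup_list_card_le (k : ℕ) :
    ∃ L : List (Finset (Fin d)), L.Nodup ∧ (∀ A, A ∈ L ↔ A.Nonempty ∧ A.card ≤ k) ∧
      (∀ x ∈ L.zipIdx, (x.2 : Fin d) ∈ x.1) ∧ L.Pairwise (·.card ≤ ·.card) := by
  induction k with
  | zero => exact ⟨[], List.nodup_nil, by simp [Finset.nonempty_iff_ne_empty], by simp, by simp⟩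
  | succ k ih =>
    obtain ⟨L, hL, hLmem, hLP, hLsorted⟩ := ih
    obtain ⟨L', hL', hL'mem, hL'P⟩ := exists_nodup_list_natCast_mem_of_vadd_mem (d := d)
      (Finset.powersetCard (k + 1) Finset.univ) (by simp [Finset.card_vadd_finset])
      (fun A hA => Finset.card_pos.mp (by simp_all)) L.length
    have hcardL : ∀ A ∈ L, A.card ≤ k := fun A hA => ((hLmem A).mp hA).2
    have hcardL' : ∀ A ∈ L', A.card = k + 1 := fun A hA => by simpa using (hL'mem A).mp hA
    refine ⟨L ++ L', ?_, ?_, ?_, ?_⟩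
    · exact hL.append hL' fun A hA hA' => by have := hcardL A hA; have := hcardL' A hA'; omega
    · intro A
      rw [List.mem_append, hLmem, hL'mem, Finset.mem_powersetCard_univ, ← Finset.card_pos]
      omega
    · rw [List.zipIdx_append, zero_add]
      exact List.forall_mem_append.mpr ⟨hLP, hL'P⟩
    · refine List.pairwise_append.mpr ⟨hLsorted, ?_, fun A hA B hB => ?_⟩
      · exact List.pairwise_of_forall_mem_list fun A hA B hB =>
          ((hcardL' A hA).trans (hcardL' B hB).symm).le
      · have := hcardL A hA; have := hcardL' B hB; omega

end Rotation

theorem stmt_4_general {α : Type*} [Fintype α] [DecidableEq α] (d : ℕ) (hd : 0 < d)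
    (e : Fin d ≃ α) :
    ∃ S : Fin (2 ^ d - 1) → Finset α,
      Function.Injective S ∧
      (∀ T : Finset α, T.Nonempty → ∃ i, S i = T) ∧
      (∀ i, (S i).Nonempty) ∧
      (∀ i : Fin (2 ^ d - 1), ∀ j : Fin d, (i : ℕ) % d = (j : ℕ) → e j ∈ S i) ∧
      (∀ i j : Fin (2 ^ d - 1), i ≤ j → (S i).card ≤ (S j).card) := by
  have : NeZero d := ⟨hd.ne'⟩
  obtain ⟨L, hL, hLmem, hLP, hLsorted⟩ := exists_nodup_list_card_le (d := d) d
  have hmem : ∀ A, A ∈ L ↔ A.Nonempty := fun A => by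
    simpa [hLmem] using fun _ => (Finset.card_le_univ A).trans_eq (Fintype.card_fin d)
  have hlen : L.length = 2 ^ d - 1 := by
    rw [← List.toFinset_card_of_nodup hL, show L.toFinset = Finset.univ.erase ∅ by
      ext A; simp [hmem, Finset.nonempty_iff_ne_empty]]
    simp
  refine ⟨fun i => L[i.cast hlen.symm].map e.toEmbedding, ?_, ?_, ?_, ?_, ?_⟩
  · intro i j hij
    simpa [Fin.ext_iff, hL.getElem_inj_iff] using Finset.map_injective _ hij
  · intro T hT
    obtain ⟨n, hn, hnT⟩ :=
      List.mem_iff_getElem.mp ((hmem _).mpr (hT.map (f := e.symm.toEmbedding)))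
    exact ⟨⟨n, hlen ▸ hn⟩, by simp [hnT, Finset.map_map]⟩
  · exact fun i => ((hmem _).mp (List.getElem_mem _)).map
  · intro i j hij
    have := hLP (L[i.cast hlen.symm], i) (List.mk_mem_zipIdx_iff_getElem?.mpr (by simp))
    rw [show ((i : ℕ) : Fin d) = j from Fin.ext (by simpa using hij)] at this
    exact Finset.mem_map_of_mem _ this
  · intro i j hij
    simp only [Finset.card_map]
    rcases hij.lt_or_eq with hij | rfl
    · exact List.pairwise_iff_getElem.mp hLsorted _ _ _ _ hij
    · rfl

/-- Let `D` be a set with `d` elements listed as `e 0, …, e (d-1)` (an enumeration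
`e : Fin d ≃ α`).  Then the nonempty subsets of `D` can be ordered
`S : Fin (2^d - 1) → Finset α` (a bijective listing of all nonempty subsets)
so that `e j ∈ S i` whenever `i ≡ j (mod d)`, and so that `i ≤ j` implies
`|S i| ≤ |S j|`. -/
theorem stmt_4 {α : Type*} [Fintype α] [DecidableEq α] (d : ℕ) (hd : 0 < d)
    (hcard : Fintype.card α = d) (e : Fin d ≃ α) :
    ∃ S : Fin (2 ^ d - 1) → Finset α,
      Function.Injective S ∧
      (∀ T : Finset α, T.Nonempty → ∃ i, S i = T) ∧
      (∀ i, (S i).Nonempty) ∧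
      (∀ i : Fin (2 ^ d - 1), ∀ j : Fin d, (i : ℕ) % d = (j : ℕ) → e j ∈ S i) ∧
      (∀ i j : Fin (2 ^ d - 1), i ≤ j → (S i).card ≤ (S j).card) :=
  stmt_4_general d hd e
end

section
/- Let S = {(u_i, v_i) : 1 ≤ i ≤ s} be a set of edges in the hypercube Q_d (vertices are elements of (Z/2)^d) such that no two edges are parallel, with u_i + v_i = e_i. Let X ⊆ (Z/2)^d satisfy: for all x, y ∈ X, x + y ≠ e_i for every 1 ≤ i ≤ s. Then each edge (z, z + e_k) appears in the translated family S + X = {(u_i + x, v_i + x) : x ∈ X, 1 ≤ i ≤ s} at most once; moreover it appears if and only if 1 ≤ k ≤ s and either z + u_k ∈ X or z + v_k ∈ X. -/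
lemma addself {d : ℕ} (a : Fin d → ZMod 2) : a + a = 0 := by
  ext j; exact CharTwo.add_self_eq_zero _

lemma single_idx_inj {d : ℕ} {a b : Fin d}
    (h : (Pi.single a 1 : Fin d → ZMod 2) = Pi.single b 1) : a = b := by
  by_contra hne
  have := congrFun h a
  rw [Pi.single_eq_same, Pi.single_eq_of_ne hne] at this
  exact one_ne_zero this

/-- **Translates of non-parallel edges (Lemma 7.4).**
Vertices of `Q_d` are elements of `(ZMod 2)^d`; write `e i = Pi.single i 1` for
the standard basis vectors.  Let `{(u i, v i) : i : Fin s}` (`s ≤ d`) be edges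
with `u i + v i = e i` (so no two are parallel), and let `X` be a set of
vertices with `x + y ≠ e i` for all `x, y ∈ X` and all `i : Fin s`.  Then each
edge `(z, z + e k)` appears in the translated family
`S + X = {(u i + x, v i + x)}` at most once; moreover it appears iff `k < s`
and either `z + u k ∈ X` or `z + v k ∈ X`. -/
theorem stmt_12 (d s : ℕ) (hs : s ≤ d)
    (u v : Fin s → (Fin d → ZMod 2))
    (hdir : ∀ i : Fin s, u i + v i = Pi.single (Fin.castLE hs i) 1)
    (X : Set (Fin d → ZMod 2))
    (hX : ∀ x ∈ X, ∀ y ∈ X, ∀ i : Fin s, x + y ≠ Pi.single (Fin.castLE hs i) 1)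
    (z : Fin d → ZMod 2) (k : Fin d) :
    let ek : Fin d → ZMod 2 := Pi.single k 1
    let App : Set (Fin s × (Fin d → ZMod 2)) :=
      {p | p.2 ∈ X ∧
        ((u p.1 + p.2 = z ∧ v p.1 + p.2 = z + ek) ∨
         (u p.1 + p.2 = z + ek ∧ v p.1 + p.2 = z))}
    App.Subsingleton ∧
      (App.Nonempty ↔ ∃ hk : (k : ℕ) < s,
        z + u ⟨k, hk⟩ ∈ X ∨ z + v ⟨k, hk⟩ ∈ X) := by
  intro ek App
  -- key: any member has index mapping to k and x ∈ {z + u i, z + v i}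
  have key : ∀ p ∈ App, (Fin.castLE hs p.1 = k) ∧ (p.2 = z + u p.1 ∨ p.2 = z + v p.1) := by
    rintro ⟨i, x⟩ ⟨hxX, hcase⟩
    have hek : Pi.single (Fin.castLE hs i) 1 = ek := by
      rcases hcase with ⟨h1, h2⟩ | ⟨h1, h2⟩
      · have : (u i + x) + (v i + x) = z + (z + ek) := by rw [h1, h2]
        calc Pi.single (Fin.castLE hs i) 1 = u i + v i := (hdir i).symm
          _ = (u i + x) + (v i + x) := by
              rw [show (u i + x) + (v i + x) = (u i + v i) + (x + x) by ring,
                addself, add_zero]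
          _ = z + (z + ek) := this
          _ = ek := by rw [← add_assoc, addself, zero_add]
      · have : (u i + x) + (v i + x) = (z + ek) + z := by rw [h1, h2]
        calc Pi.single (Fin.castLE hs i) 1 = u i + v i := (hdir i).symm
          _ = (u i + x) + (v i + x) := by
              rw [show (u i + x) + (v i + x) = (u i + v i) + (x + x) by ring,
                addself, add_zero]
          _ = (z + ek) + z := this
          _ = ek := by rw [show (z + ek) + z = ek + (z + z) by ring, addself, add_zero]
    refine ⟨single_idx_inj hek, ?_⟩
    rcases hcase with ⟨h1, _⟩ | ⟨h1, _⟩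
    · left
      have : x = z + u i := by
        have := congrArg (· + u i) h1
        simpa [show u i + x + u i = x + (u i + u i) by ring, addself] using this
      exact this
    · right
      have huv : v i = u i + ek := by
        have := hdir i; rw [hek] at this
        have := congrArg (· + u i) this
        simpa [show u i + v i + u i = v i + (u i + u i) by ring, addself, add_comm] using this
      have : x = z + ek + u i := by
        have := congrArg (· + u i) h1
        simpa [show u i + x + u i = x + (u i + u i) by ring, addself] using this
      rw [this, huv]; ring
  constructor
  · rintro ⟨i, x⟩ hp ⟨j, y⟩ hq
    obtain ⟨hik, hx⟩ := key _ hp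
    obtain ⟨hjk, hy⟩ := key _ hq
    have hij : i = j := Fin.castLE_injective hs (hik.trans hjk.symm)
    subst hij
    dsimp only at hx hy
    have hxy : x = y := by
      rcases hx with hx | hx <;> rcases hy with hy | hy
      · rw [hx, hy]
      · exfalso
        apply hX _ hp.1 _ hq.1 i
        rw [hx, hy, show (z + u i) + (z + v i) = u i + v i + (z + z) by ring,
          addself, add_zero, hdir i]
      · exfalso
        apply hX _ hp.1 _ hq.1 i
        rw [hx, hy, show (z + v i) + (z + u i) = u i + v i + (z + z) by ring,
          addself, add_zero, hdir i]
      · rw [hx, hy]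
    rw [hxy]
  · constructor
    · rintro ⟨⟨i, x⟩, hp⟩
      obtain ⟨hik, hx⟩ := key _ hp
      have hks : (k : ℕ) < s := by
        have : (k : ℕ) = (i : ℕ) := by rw [← hik]; rfl
        rw [this]; exact i.isLt
      refine ⟨hks, ?_⟩
      have hi : (⟨k, hks⟩ : Fin s) = i := by
        apply Fin.castLE_injective hs; rw [hik]; rfl
      rw [hi]
      rcases hx with hx | hx
      · left; rw [← hx]; exact hp.1
      · right; rw [← hx]; exact hp.1
    · rintro ⟨hk, hmem⟩
      set i : Fin s := ⟨k, hk⟩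
      have hik : Fin.castLE hs i = k := rfl
      rcases hmem with hm | hm
      · refine ⟨(i, z + u i), hm, Or.inl ⟨?_, ?_⟩⟩
        · rw [show u i + (z + u i) = z + (u i + u i) by ring, addself, add_zero]
        · rw [show v i + (z + u i) = z + (u i + v i) by ring, hdir i, hik]
      · refine ⟨(i, z + v i), hm, Or.inr ⟨?_, ?_⟩⟩
        · rw [show u i + (z + v i) = z + (u i + v i) by ring, hdir i, hik]
        · rw [show v i + (z + v i) = z + (v i + v i) by ring, addself, add_zero]
end

section
/- Identify subsets of {1,...,d} with binary words of length d, acted on by the cyclic shift P. Call a subset S special if its orbit under P has fewer than d elements, and define an antecedent of S to be S \ {e_i} for some e_i ∈ S. Then every subset S with more than one element has an antecedent whose orbit under P has exactly d elements (a regular antecedent). -/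
section aux

variable {d : ℕ} [NeZero d]

private lemma step_add {T : Finset (Fin d)} {b : Fin d}
    (h : T.image (· + b) = T) {x : Fin d} (hx : x ∈ T) : x + b ∈ T := by
  have := Finset.mem_image_of_mem (· + b) hx
  rwa [h] at this

private lemma step_sub {T : Finset (Fin d)} {b : Fin d}
    (h : T.image (· + b) = T) {x : Fin d} (hx : x ∈ T) : x - b ∈ T := by
  rw [← h] at hx
  obtain ⟨y, hy, hyx⟩ := Finset.mem_image.mp hx
  have : y = x - b := eq_sub_of_add_eq hyx
  exact this ▸ hy

private lemma half_eq {b c : Fin d} (hb : b ≠ 0) (hc : c ≠ 0)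
    (hbb : b + b = 0) (hcc : c + c = 0) : b = c := by
  have key : ∀ x : Fin d, x ≠ 0 → x + x = 0 → x.val + x.val = d := by
    intro x hx hxx
    have h1 : (x.val + x.val) % d = 0 := by simpa [Fin.ext_iff, Fin.val_add] using hxx
    have hdvd : d ∣ x.val + x.val := Nat.dvd_of_mod_eq_zero h1
    have hpos : 0 < x.val + x.val := by
      have : x.val ≠ 0 := fun h => hx (Fin.ext (by simpa using h))
      omega
    have hle : d ≤ x.val + x.val := Nat.le_of_dvd hpos hdvd
    have hlt : x.val + x.val < 2 * d := by have := x.isLt; omega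
    have hdvd2 : d ∣ (x.val + x.val - d) := Nat.dvd_sub hdvd dvd_rfl
    have hz : x.val + x.val - d = 0 := by
      rcases Nat.eq_zero_or_pos (x.val + x.val - d) with h | h
      · exact h
      · exact absurd (Nat.le_of_dvd h hdvd2) (by omega)
    omega
  have h1 := key b hb hbb
  have h2 := key c hc hcc
  exact Fin.ext (by omega)

end aux

/-- **Existence of a regular antecedent (Lemma 7.10).**
Identify subsets of `{1,…,d}` with subsets `S : Finset (Fin d)`, acted on by the
cyclic shift `P : T ↦ T.image (· + 1)` (indices mod `d`); `P^b S = S.image (· + b)`.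
A subset is *regular* if its orbit under `P` has exactly `d` elements,
equivalently `S.image (· + b) ≠ S` for every `b ≠ 0`; otherwise it is *special*.
An *antecedent* of `S` is `S \ {i}` for some `i ∈ S`.  Every subset `S` with
more than one element has a regular antecedent. -/
theorem stmt_14 (d : ℕ) [NeZero d] (S : Finset (Fin d)) (hS : 2 ≤ S.card) :
    ∃ i ∈ S, ∀ b : Fin d, b ≠ 0 → (S.erase i).image (· + b) ≠ S.erase i := by
  by_contra hcon
  push_neg at hcon
  obtain ⟨i, hi, j, hj, hij⟩ := Finset.one_lt_card.mp hS
  obtain ⟨b, hb0, hbI⟩ := hcon i hi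
  obtain ⟨c, hc0, hcI⟩ := hcon j hj
  set Ti := S.erase i with hTi
  set Tj := S.erase j with hTj
  have memTi : ∀ x : Fin d, x ∈ S → x ≠ i → x ∈ Ti :=
    fun x hx hxi => Finset.mem_erase.mpr ⟨hxi, hx⟩
  have memTj : ∀ x : Fin d, x ∈ S → x ≠ j → x ∈ Tj :=
    fun x hx hxj => Finset.mem_erase.mpr ⟨hxj, hx⟩
  have TiS : ∀ x : Fin d, x ∈ Ti → x ∈ S := fun x hx => Finset.mem_of_mem_erase hx
  have TjS : ∀ x : Fin d, x ∈ Tj → x ∈ S := fun x hx => Finset.mem_of_mem_erase hx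
  have iTi : i ∉ Ti := fun h => (Finset.mem_erase.mp h).1 rfl
  have jTj : j ∉ Tj := fun h => (Finset.mem_erase.mp h).1 rfl
  -- F3₁ : i + b ∉ S
  have F31 : i + b ∉ S := by
    intro hmem
    have h1 : i + b ∈ Ti := memTi _ hmem (by
      intro h
      exact hb0 (by rwa [add_eq_left] at h))
    have h2 : i + b - b ∈ Ti := step_sub hbI h1
    rw [show i + b - b = i by abel] at h2
    exact iTi h2
  -- F3₂ : b + b ≠ 0 → i + b + b ∉ S
  have F32 : b + b ≠ 0 → i + b + b ∉ S := by
    intro hbb hmem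
    have h1 : i + b + b ∈ Ti := memTi _ hmem (by
      intro h
      exact hbb (by rw [add_assoc, add_eq_left] at h; exact h))
    have h2 : i + b + b - b ∈ Ti := step_sub hbI h1
    rw [show i + b + b - b = i + b by abel] at h2
    have h3 : i + b - b ∈ Ti := step_sub hbI h2
    rw [show i + b - b = i by abel] at h3
    exact iTi h3
  -- F4₁ : j + c ∉ S
  have F41 : j + c ∉ S := by
    intro hmem
    have h1 : j + c ∈ Tj := memTj _ hmem (by
      intro h
      exact hc0 (by rwa [add_eq_left] at h))
    have h2 : j + c - c ∈ Tj := step_sub hcI h1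
    rw [show j + c - c = j by abel] at h2
    exact jTj h2
  -- the walk
  have hiTj : i ∈ Tj := memTj _ hi hij
  have hx1 : i + c ∈ Tj := step_add hcI hiTj
  by_cases hB : i + c + b = j
  · -- case B : j = i + c + b
    -- first show c + c = 0
    have hcc : c + c = 0 := by
      by_contra hcc
      have h1 : i + c + c ∈ Tj := step_add hcI hx1
      have h2 : i + c + c ∈ Ti := memTi _ (TjS _ h1) (by
        intro h
        exact hcc (by rw [add_assoc, add_eq_left] at h; exact h))
      have h3 : i + c + c + b ∈ Ti := step_add hbI h2
      have h4 : i + c + c + b = j + c := by rw [← hB]; abel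
      exact F41 (h4 ▸ TiS _ h3)
    -- then show b + b = 0
    have hbb : b + b = 0 := by
      by_contra hbb
      have hjTi : j ∈ Ti := memTi _ hj (Ne.symm hij)
      have h1 : j + b ∈ Ti := step_add hbI hjTi
      have h2 : j + b ∈ Tj := memTj _ (TiS _ h1) (by
        intro h
        exact hb0 (by rwa [add_eq_left] at h))
      have h3 : j + b - c ∈ Tj := step_sub hcI h2
      have h4 : j + b - c = i + b + b := by rw [← hB]; abel
      exact F32 hbb (h4 ▸ TjS _ h3)
    -- now b = c, so j = i, contradiction
    have hbc : b = c := half_eq hb0 hc0 hbb hcc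
    apply hij
    rw [← hB, hbc, add_assoc, hcc, add_zero]
  · -- case A : i + c + b ≠ j
    have hx1i : i + c ≠ i := by
      intro h
      exact hc0 (by rwa [add_eq_left] at h)
    have h1 : i + c ∈ Ti := memTi _ (TjS _ hx1) hx1i
    have h2 : i + c + b ∈ Ti := step_add hbI h1
    have h3 : i + c + b ∈ Tj := memTj _ (TiS _ h2) hB
    have h4 : i + c + b - c ∈ Tj := step_sub hcI h3
    rw [show i + c + b - c = i + b by abel] at h4
    exact F31 (TjS _ h4)
end

section
/- Fix d and s with 0 < s < d, and for each divisor n of gcd(d,s) let ρ_n = C(d/n, s/n) (binomial coefficient). Then ρ_1 ≥ Σ_{n | gcd(d,s), n ≠ 1} (n² - n - 1) ρ_n. -/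
/-!
Write `g = gcd d s`, `d = u g`, `s = v g`, so that `ρ_n = C(u m, v m)` when `g = n m`.
Vandermonde gives `C(u (m + 1), v (m + 1)) ≥ C(u, v) C(u m, v m)`, and `C(u, v) ≥ u ≥ 3` unless
`(u, v) = (2, 1)`, where the central binomial recursion still gives a factor `3` once `m ≥ 1`.
Hence `ρ_1 ≥ 3^(g - m) ρ_n`. For the top divisor `n = g` this yields `2 (g² - g - 1) ρ_g ≤ ρ_1`
(for `g = 3` the needed factor is `10`, attained at `(u, v) = (2, 1)`), and for a proper divisor
(`m ≥ 2`) it yields `2^n (n² - n - 1) ρ_n ≤ ρ_1`. As `∑_{n ≥ 2} 2^(-n) = 1/2`, the proper divisors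
and the top divisor each contribute at most `ρ_1 / 2`.
-/

open Finset

namespace Nat

theorem choose_mul_choose_le_choose_add (a b c e : ℕ) :
    a.choose c * b.choose e ≤ (a + b).choose (c + e) := by
  rw [add_choose_eq]
  exact single_le_sum (f := fun ij => a.choose ij.1 * b.choose ij.2) (a := (c, e))
    (fun _ _ => zero_le _) (mem_antidiagonal.2 rfl)

theorem self_le_choose {u v : ℕ} (hv : 0 < v) (hvu : v < u) : u ≤ u.choose v := by
  induction u generalizing v with
  | zero => omega
  | succ u ih =>
    obtain rfl | ⟨w, rfl⟩ : v = 1 ∨ ∃ w, v = w + 1 + 1 := by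
      rcases v with _ | _ | w <;> simp_all
    · simp
    · have h₁ := ih (v := w + 1) (by omega) (by omega)
      have h₂ := choose_pos (n := u) (k := w + 1 + 1) (by omega)
      rw [choose_succ_succ']
      omega

theorem three_mul_choose_mul_le {u v m : ℕ} (hv : 0 < v) (hvu : v < u) (hm : 0 < m) :
    3 * (u * m).choose (v * m) ≤ (u * (m + 1)).choose (v * (m + 1)) := by
  obtain h₃ | ⟨rfl, rfl⟩ : 3 ≤ u.choose v ∨ u = 2 ∧ v = 1 := by
    have := self_le_choose hv hvu
    omega
  · rw [mul_add_one, mul_add_one, mul_comm 3]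
    exact (Nat.mul_le_mul_left _ h₃).trans (choose_mul_choose_le_choose_add _ _ _ _)
  · -- `(m + 1) C(2m + 2, m + 1) = 2 (2m + 1) C(2m, m)` and `2 (2m + 1) ≥ 3 (m + 1)`
    have h := succ_mul_centralBinom_succ m
    simp only [centralBinom_eq_two_mul_choose] at h
    simp only [one_mul]
    refine Nat.le_of_mul_le_mul_left ?_ (succ_pos m)
    rw [h]
    nlinarith

theorem three_pow_mul_choose_mul_le {u v m : ℕ} (hv : 0 < v) (hvu : v < u) (hm : 0 < m)
    (k : ℕ) : 3 ^ k * (u * m).choose (v * m) ≤ (u * (m + k)).choose (v * (m + k)) := by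
  induction k with
  | zero => simp
  | succ k ih =>
    calc 3 ^ (k + 1) * (u * m).choose (v * m) = 3 * (3 ^ k * (u * m).choose (v * m)) := by ring
      _ ≤ 3 * (u * (m + k)).choose (v * (m + k)) := Nat.mul_le_mul_left 3 ih
      _ ≤ (u * (m + (k + 1))).choose (v * (m + (k + 1))) :=
        three_mul_choose_mul_le hv hvu (by omega)

theorem ten_mul_choose_le_choose_mul_three {u v : ℕ} (hv : 0 < v) (hvu : v < u) :
    10 * u.choose v ≤ (u * 3).choose (v * 3) := by
  obtain h₄ | h₄ := le_or_gt 4 (u.choose v)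
  · have h₂ := choose_mul_choose_le_choose_add u u v v
    have h₃ := choose_mul_choose_le_choose_add (u + u) u (v + v) v
    rw [show u * 3 = u + u + u by ring, show v * 3 = v + v + v by ring]
    nlinarith
  · have : u ≤ 3 := (self_le_choose hv hvu).trans (by omega)
    interval_cases u <;> interval_cases v <;> decide

end Nat

theorem two_mul_succ_mul_le_three_pow {n : ℕ} (hn : 3 ≤ n) : 2 * ((n + 1) * n) ≤ 3 ^ n := by
  induction n, hn using Nat.le_induction with
  | base => norm_num
  | succ n _ ih => rw [pow_succ]; nlinarith

theorem two_pow_mul_succ_mul_le_nine_pow {n : ℕ} (hn : 1 ≤ n) :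
    2 ^ (n + 1) * ((n + 1) * n) ≤ 9 ^ n := by
  induction n, hn using Nat.le_induction with
  | base => norm_num
  | succ n hn ih =>
    rw [pow_succ, pow_succ 9]
    nlinarith [Nat.mul_le_mul_left (2 ^ (n + 1) * (n + 1)) (show 4 ≤ 7 * n by omega)]

theorem two_mul_sum_le_of_two_pow_mul_le {S : Finset ℕ} {A : ℕ} {f : ℕ → ℕ}
    (hS : ∀ n ∈ S, 2 ≤ n) (hf : ∀ n ∈ S, 2 ^ n * f n ≤ A) : 2 * ∑ n ∈ S, f n ≤ A := by
  have hIco : S ⊆ Ico 2 (S.sup id + 1) := fun n hn =>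
    mem_Ico.2 ⟨hS n hn, Nat.lt_succ_of_le (le_sup (f := id) hn)⟩
  have hfn : ∀ n ∈ S, (f n : ℝ) ≤ A * (1 / 2) ^ n := by
    intro n hn
    rw [one_div_pow, mul_one_div, le_div_iff₀ (by positivity), mul_comm]
    exact_mod_cast hf n hn
  have : (2 : ℝ) * ∑ n ∈ S, (f n : ℝ) ≤ A :=
    calc (2 : ℝ) * ∑ n ∈ S, (f n : ℝ) ≤ 2 * ∑ n ∈ S, A * (1 / 2 : ℝ) ^ n := by
          gcongr with n hn
          exact hfn n hn
      _ ≤ 2 * ∑ n ∈ Ico 2 (S.sup id + 1), A * (1 / 2 : ℝ) ^ n := by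
          gcongr
      _ = 2 * A * ∑ n ∈ Ico 2 (S.sup id + 1), (1 / 2 : ℝ) ^ n := by rw [← mul_sum]; ring
      _ ≤ 2 * A * ((1 / 2) ^ 2 / (1 - 1 / 2)) := by
          gcongr
          exact geom_sum_Ico_le_of_lt_one (by norm_num) (by norm_num)
      _ = A := by ring
  exact_mod_cast this

theorem two_mul_weight_mul_choose_le {u v g : ℕ} (hv : 0 < v) (hvu : v < u) (hg : 2 ≤ g) :
    2 * ((g ^ 2 - g - 1) * u.choose v) ≤ (u * g).choose (v * g) := by
  have hchain := Nat.three_pow_mul_choose_mul_le hv hvu one_pos (g - 1)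
  rw [mul_one, mul_one, Nat.add_sub_cancel' (by omega : 1 ≤ g)] at hchain
  obtain rfl | rfl | hg₄ : g = 2 ∨ g = 3 ∨ 4 ≤ g := by omega
  · norm_num at hchain ⊢
    omega
  · simpa [← mul_assoc] using Nat.ten_mul_choose_le_choose_mul_three hv hvu
  · obtain ⟨n, rfl⟩ : ∃ n, g = n + 1 := ⟨g - 1, by omega⟩
    have hweight : (n + 1) ^ 2 - (n + 1) - 1 ≤ (n + 1) * n := by
      have : (n + 1) ^ 2 = (n + 1) * n + (n + 1) := by ring
      omega
    calc 2 * (((n + 1) ^ 2 - (n + 1) - 1) * u.choose v)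
        ≤ 2 * ((n + 1) * n) * u.choose v := by rw [← mul_assoc]; gcongr
      _ ≤ 3 ^ n * u.choose v := by gcongr; exact two_mul_succ_mul_le_three_pow (by omega)
      _ ≤ _ := by simpa using hchain

theorem two_pow_mul_weight_mul_choose_le {u v m n : ℕ} (hv : 0 < v) (hvu : v < u) (hm : 2 ≤ m)
    (hn : 2 ≤ n) :
    2 ^ n * ((n ^ 2 - n - 1) * (u * m).choose (v * m)) ≤ (u * (m * n)).choose (v * (m * n)) := by
  obtain ⟨k, rfl⟩ : ∃ k, n = k + 1 := ⟨n - 1, by omega⟩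
  have hweight : (k + 1) ^ 2 - (k + 1) - 1 ≤ (k + 1) * k := by
    have : (k + 1) ^ 2 = (k + 1) * k + (k + 1) := by ring
    omega
  have hpow : 9 ^ k ≤ 3 ^ (m * k) := by
    rw [pow_mul]
    exact Nat.pow_le_pow_left (by simpa using Nat.pow_le_pow_right three_pos hm) k
  have hchain := Nat.three_pow_mul_choose_mul_le hv hvu (by omega : 0 < m) (m * k)
  rw [show m + m * k = m * (k + 1) by ring] at hchain
  calc 2 ^ (k + 1) * (((k + 1) ^ 2 - (k + 1) - 1) * (u * m).choose (v * m))
      ≤ 2 ^ (k + 1) * ((k + 1) * k) * (u * m).choose (v * m) := by rw [← mul_assoc]; gcongr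
    _ ≤ 9 ^ k * (u * m).choose (v * m) := by
        gcongr; exact two_pow_mul_succ_mul_le_nine_pow (by omega)
    _ ≤ 3 ^ (m * k) * (u * m).choose (v * m) := by gcongr
    _ ≤ _ := hchain

theorem sum_divisors_weight_mul_choose_le {u v : ℕ} (hv : 0 < v) (hvu : v < u) (g : ℕ) :
    ∑ n ∈ g.divisors.erase 1, (n ^ 2 - n - 1) * (u * g / n).choose (v * g / n) ≤
      (u * g).choose (v * g) := by
  obtain hg | hg := lt_or_ge g 2
  · interval_cases g <;> simp
  have hgS : g ∈ g.divisors.erase 1 := mem_erase.2 ⟨by omega, Nat.mem_divisors_self g (by omega)⟩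
  have htop := two_mul_weight_mul_choose_le hv hvu hg
  have hrest : 2 * ∑ n ∈ (g.divisors.erase 1).erase g,
      (n ^ 2 - n - 1) * (u * g / n).choose (v * g / n) ≤ (u * g).choose (v * g) := by
    refine two_mul_sum_le_of_two_pow_mul_le (fun n hn => ?_) (fun n hn => ?_) <;>
      obtain ⟨hng, hn₁, hndvd, hg₀⟩ : n ≠ g ∧ n ≠ 1 ∧ n ∣ g ∧ g ≠ 0 := by
        simpa [and_assoc] using hn
    · have := Nat.pos_of_dvd_of_pos hndvd (by omega)
      omega
    · obtain ⟨m, rfl⟩ := hndvd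
      have hn₀ : 0 < n := Nat.pos_of_ne_zero (left_ne_zero_of_mul hg₀)
      have hdiv (w : ℕ) : w * (n * m) / n = w * m := by
        rw [mul_left_comm, Nat.mul_div_cancel_left _ hn₀]
      rw [hdiv u, hdiv v, mul_comm n m]
      refine two_pow_mul_weight_mul_choose_le hv hvu ?_ (by omega)
      by_contra! hm
      interval_cases m <;> simp_all
  rw [← add_sum_erase _ _ hgS, Nat.mul_div_cancel _ (by omega), Nat.mul_div_cancel _ (by omega)]
  omega

/-- **Counting estimate (from Lemma 7.11).**
Fix `d` and `s` with `0 < s < d`, and for each divisor `n` of `gcd d s` let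
`ρ_n = C(d/n, s/n)`.  Then `ρ_1 ≥ Σ_{n ∣ gcd(d,s), n ≠ 1} (n² - n - 1) ρ_n`. -/
theorem stmt_15 (d s : ℕ) (hs : 0 < s) (hsd : s < d) :
    ∑ n ∈ (Nat.gcd d s).divisors.erase 1, (n ^ 2 - n - 1) * Nat.choose (d / n) (s / n) ≤
      Nat.choose d s := by
  have hg : 0 < Nat.gcd d s := Nat.gcd_pos_of_pos_right d hs
  have key := sum_divisors_weight_mul_choose_le (u := d / Nat.gcd d s) (v := s / Nat.gcd d s)
    (Nat.div_pos (Nat.le_of_dvd hs (Nat.gcd_dvd_right d s)) hg)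
    (Nat.div_lt_div_of_lt_of_dvd (Nat.gcd_dvd_left d s) hsd) (Nat.gcd d s)
  rwa [Nat.div_mul_cancel (Nat.gcd_dvd_left d s), Nat.div_mul_cancel (Nat.gcd_dvd_right d s)]
    at key
end
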